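/- Let T_s > 0 and let K_p, K_d be real numbers. For f̄ ∈ (0,1], define the 2×2 real matrix A_cl(f̄) = [[1 − f̄ T_s² K_p / 2, T_s − f̄ T_s² K_d / 2], [−f̄ T_s K_p, 1 − f̄ T_s K_d]]. If A_cl(1) is Schur stable (all eigenvalues have modulus strictly less than 1), then A_cl(f̄) is Schur stable for every f̄ ∈ (0,1]. -/

import Mathlib

/-!
The characteristic polynomial of `A_cl(f̄)` is `z ^ 2 - (2 - f̄ (α + β)) z + (1 + f̄ (α - β))` with
`α = T_s² K_p / 2` and `β = T_s K_d`. By the Jury test, a real monic quadratic `z ^ 2 + b z + c`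
has both roots in the open unit disc iff `|c| < 1`, `0 < 1 + b + c` and `0 < 1 - b + c`; for
`A_cl(f̄)` these read `-2 < f̄ (α - β) < 0`, `0 < f̄ α` and `f̄ β < 2`. Each holds at `f̄ = 1`, and
each is preserved when `f̄` shrinks to any value in `(0, 1]`.
-/

open Matrix

/-- A real square matrix is Schur stable if every complex eigenvalue has modulus
strictly less than one. -/
def SchurStable {k : ℕ} (M : Matrix (Fin k) (Fin k) ℝ) : Prop :=
  ∀ z ∈ spectrum ℂ (M.map Complex.ofReal), ‖z‖ < 1

/-- Frozen-gain closed-loop matrix of the sampled double integrator under the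
scaled state feedback `u = -f̄ [K_p, K_d] x` with sampling time `T_s`. -/
noncomputable def Acl (Ts Kp Kd f : ℝ) : Matrix (Fin 2) (Fin 2) ℝ :=
  !![1 - f * Ts ^ 2 * Kp / 2, Ts - f * Ts ^ 2 * Kd / 2;
     -(f * Ts * Kp), 1 - f * Ts * Kd]

open ComplexConjugate

theorem Matrix.mem_spectrum_fin_two_iff {K : Type*} [Field K] (N : Matrix (Fin 2) (Fin 2) K)
    (z : K) : z ∈ spectrum K N ↔ z ^ 2 - N.trace * z + N.det = 0 := by
  rw [spectrum.mem_iff, isUnit_iff_isUnit_det, isUnit_iff_ne_zero, not_not, det_fin_two,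
    trace_fin_two, det_fin_two]
  simp only [sub_apply, algebraMap_matrix_apply, ↓reduceIte, Algebra.algebraMap_self,
    RingHom.id_apply, zero_ne_one, one_ne_zero, zero_sub, mul_neg, neg_mul, neg_neg]
  constructor <;> intro h <;> linear_combination h

theorem norm_lt_one_of_sq_add_mul_add_eq_zero {b c : ℝ} (hc : |c| < 1) (hp1 : 0 < 1 + b + c)
    (hpm1 : 0 < 1 - b + c) {z : ℂ} (hz : z ^ 2 + b * z + c = 0) : ‖z‖ < 1 := by
  obtain ⟨hc_lo, hc_hi⟩ := abs_lt.mp hc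
  by_cases him : z.im = 0
  · obtain ⟨x, rfl⟩ : ∃ x : ℝ, z = x := ⟨z.re, Complex.ext rfl (by simp [him])⟩
    have hx : x ^ 2 + b * x + c = 0 := by exact_mod_cast hz
    rw [Complex.norm_real, Real.norm_eq_abs, abs_lt]
    constructor <;> nlinarith [sq_nonneg (x + 1), sq_nonneg (x - 1)]
  · -- a non-real root and its conjugate are the two roots, so `‖z‖ ^ 2 = z * conj z = c`
    have hconj : conj z ^ 2 + b * conj z + c = 0 := by
      simpa using congrArg (starRingEnd ℂ) hz
    have hsum : z + conj z = -b := by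
      have hne : z - conj z ≠ 0 := sub_ne_zero.mpr fun h => him (Complex.conj_eq_iff_im.mp h.symm)
      refine eq_neg_of_add_eq_zero_left (mul_left_cancel₀ hne ?_)
      linear_combination hz - hconj
    have hnorm : ‖z‖ ^ 2 = c := by
      rw [Complex.sq_norm, ← Complex.ofReal_inj, ← Complex.mul_conj]
      linear_combination z * hsum - hz
    nlinarith [norm_nonneg z]

theorem one_add_add_pos_of_forall_norm_lt_one {b c : ℝ}
    (h : ∀ z : ℂ, z ^ 2 + b * z + c = 0 → ‖z‖ < 1) : 0 < 1 + b + c := by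
  by_contra! hle
  -- the discriminant is at least `(b + 2) ^ 2`, so the larger real root is at least `1`
  have hdisc : (b + 2) ^ 2 ≤ b ^ 2 - 4 * c := by nlinarith
  set x := (-b + √(b ^ 2 - 4 * c)) / 2 with hx
  have hsqrt := Real.sq_sqrt ((sq_nonneg _).trans hdisc)
  have hroot : x ^ 2 + b * x + c = 0 := by rw [hx]; linear_combination hsqrt / 4
  have hx1 : 1 ≤ x := by linarith [le_abs_self (b + 2), Real.abs_le_sqrt hdisc]
  have := h x (by exact_mod_cast hroot)
  rw [Complex.norm_real, Real.norm_eq_abs] at this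
  linarith [le_abs_self x]

theorem abs_lt_one_of_forall_norm_lt_one {b c : ℝ}
    (h : ∀ z : ℂ, z ^ 2 + b * z + c = 0 → ‖z‖ < 1) : |c| < 1 := by
  obtain ⟨s, hs⟩ := IsAlgClosed.exists_eq_mul_self ((b : ℂ) ^ 2 - 4 * c)
  have hr := h ((-b + s) / 2) (by linear_combination -hs / 4)
  have hr' := h ((-b - s) / 2) (by linear_combination -hs / 4)
  have hprod : (-b + s) / 2 * ((-b - s) / 2) = (c : ℂ) := by linear_combination hs / 4
  rw [← Real.norm_eq_abs, ← Complex.norm_real, ← hprod, norm_mul]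
  exact mul_lt_one_of_nonneg_of_lt_one_left (norm_nonneg _) hr hr'.le

theorem forall_norm_lt_one_iff (b c : ℝ) :
    (∀ z : ℂ, z ^ 2 + b * z + c = 0 → ‖z‖ < 1) ↔ |c| < 1 ∧ 0 < 1 + b + c ∧ 0 < 1 - b + c := by
  refine ⟨fun h =>
    ⟨abs_lt_one_of_forall_norm_lt_one h, one_add_add_pos_of_forall_norm_lt_one h, ?_⟩,
    fun ⟨hc, hp1, hpm1⟩ _ => norm_lt_one_of_sq_add_mul_add_eq_zero hc hp1 hpm1⟩
  -- `z ↦ -z` turns the roots of `z ^ 2 + b z + c` into those of `z ^ 2 - b z + c`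
  have := one_add_add_pos_of_forall_norm_lt_one (b := -b) (c := c) fun z hz => by
    simpa using h (-z) (by push_cast at hz; linear_combination hz)
  linarith

theorem schurStable_fin_two_iff (M : Matrix (Fin 2) (Fin 2) ℝ) :
    SchurStable M ↔ |M.det| < 1 ∧ 0 < 1 - M.trace + M.det ∧ 0 < 1 + M.trace + M.det := by
  have hdet : (M.map Complex.ofReal).det = M.det := (Complex.ofRealHom.map_det M).symm
  have htr : (M.map Complex.ofReal).trace = M.trace :=
    (AddMonoidHom.map_trace Complex.ofRealHom M).symm
  calc SchurStable M ↔ ∀ z : ℂ, z ^ 2 + ((-M.trace : ℝ) : ℂ) * z + M.det = 0 → ‖z‖ < 1 :=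
        forall_congr' fun z => by
          rw [mem_spectrum_fin_two_iff, htr, hdet, Complex.ofReal_neg, neg_mul, ← sub_eq_add_neg]
    _ ↔ _ := by rw [forall_norm_lt_one_iff, ← sub_eq_add_neg, sub_neg_eq_add]

theorem trace_Acl (Ts Kp Kd f : ℝ) :
    (Acl Ts Kp Kd f).trace = 2 - f * (Ts ^ 2 * Kp / 2 + Ts * Kd) := by
  rw [Acl, trace_fin_two_of]; ring

theorem det_Acl (Ts Kp Kd f : ℝ) :
    (Acl Ts Kp Kd f).det = 1 + f * (Ts ^ 2 * Kp / 2 - Ts * Kd) := by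
  rw [Acl, det_fin_two_of]; ring

theorem frozen_gain_schur_stable_general (Ts Kp Kd : ℝ)
    (hnom : SchurStable (Acl Ts Kp Kd 1)) :
    ∀ f ∈ Set.Ioc (0 : ℝ) 1, SchurStable (Acl Ts Kp Kd f) := by
  rintro f ⟨hf0, hf1⟩
  rw [schurStable_fin_two_iff, trace_Acl, det_Acl] at hnom ⊢
  set α := Ts ^ 2 * Kp / 2
  set β := Ts * Kd
  obtain ⟨hdet, hp1, hpm1⟩ := hnom
  obtain ⟨hdet_lo, hdet_hi⟩ := abs_lt.mp hdet
  have hα : 0 < α := by linarith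
  have hβ : β < 2 := by linarith
  have hαβ : α - β < 0 := by linarith
  refine ⟨abs_lt.mpr ⟨?_, ?_⟩, ?_, ?_⟩
  · linarith [mul_nonneg (sub_nonneg.mpr hf1) (neg_nonneg.mpr hαβ.le)]
  · linarith [mul_pos hf0 (neg_pos.mpr hαβ)]
  · linarith [mul_pos hf0 hα]
  · linarith [mul_pos hf0 (sub_pos.mpr hβ)]

/-- If the nominal closed loop `A_cl(1)` is Schur stable, then the frozen-gain
closed loop `A_cl(f̄)` is Schur stable for every `f̄ ∈ (0, 1]`. -/
theorem frozen_gain_schur_stable (Ts Kp Kd : ℝ) (hTs : 0 < Ts)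
    (hnom : SchurStable (Acl Ts Kp Kd 1)) :
    ∀ f ∈ Set.Ioc (0 : ℝ) 1, SchurStable (Acl Ts Kp Kd f) :=
  frozen_gain_schur_stable_general Ts Kp Kd hnom
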